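/- Let (X,Σ,μ) be a σ-finite measure space, 1 ≤ a < b ≤ ∞, and ψ : (a,b) → (0,∞) continuous. Let f : X → ℝ be measurable with f ≥ 0 μ-a.e., 0 < ‖f‖_{G(ψ)} < ∞, |f|_p < ∞ for every p ∈ (a,b), and lim_{p→a+} |f|_p/ψ(p) = 0 = lim_{p→b−} |f|_p/ψ(p). Then there exist σ ∈ (a,b) and a measurable g : X → [0,∞) with 0 < |g|_{σ'} < ∞ such that ∫_X f g dμ = ‖f‖_{G(ψ)} · ‖g‖_{SL(ψ)}; in particular the generalized Hölder inequality between G(ψ) and SL(ψ) is attained on f. -/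

import Mathlib

open MeasureTheory Filter Set
open scoped ENNReal Topology NNReal

noncomputable section

/-- The `L_p` (quasi-)norm `|f|_p = (∫ |f|^p dμ)^{1/p}` with values in `[0,∞]`. -/
def lpNorm {X : Type*} [MeasurableSpace X] (μ : Measure X) (f : X → ℝ) (p : ℝ) : ℝ≥0∞ :=
  (∫⁻ x, ENNReal.ofReal (|f x| ^ p) ∂μ) ^ (1 / p)

/-- The interval `(a, b)` of exponents, with possibly infinite right endpoint `b`. -/
def gIoo (a : ℝ) (b : ℝ≥0∞) : Set ℝ := {p : ℝ | a < p ∧ ENNReal.ofReal p < b}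

/-- The Grand Lebesgue norm `‖f‖_{G(ψ)} = sup_{p ∈ (a,b)} |f|_p / ψ(p)`. -/
def grandNorm {X : Type*} [MeasurableSpace X] (μ : Measure X) (ψ : ℝ → ℝ) (a : ℝ) (b : ℝ≥0∞)
    (f : X → ℝ) : ℝ≥0∞ :=
  ⨆ p ∈ gIoo a b, lpNorm μ f p / ENNReal.ofReal (ψ p)

/-- The conjugate exponent `q' = q/(q-1)`. -/
def conjExp (q : ℝ) : ℝ := q / (q - 1)

/-- A decomposition `g = ∑ₖ gₖ` (μ-a.e.) with exponents `q k ∈ (a,b)`, as used in the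
definition of the Small Lebesgue norm. -/
structure SLDecomp {X : Type*} [MeasurableSpace X] (μ : Measure X) (a : ℝ) (b : ℝ≥0∞)
    (g : X → ℝ) where
  gk : ℕ → X → ℝ
  q : ℕ → ℝ
  meas : ∀ k, Measurable (gk k)
  mem : ∀ k, q k ∈ gIoo a b
  sum : ∀ᵐ x ∂μ, HasSum (fun k => gk k x) (g x)

/-- The cost `∑ₖ ψ(q(k)) |gₖ|_{q(k)'}` of a decomposition. -/
def SLDecomp.cost {X : Type*} [MeasurableSpace X] {μ : Measure X} {a : ℝ} {b : ℝ≥0∞}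
    {g : X → ℝ} (d : SLDecomp μ a b g) (ψ : ℝ → ℝ) : ℝ≥0∞ :=
  ∑' k, ENNReal.ofReal (ψ (d.q k)) * lpNorm μ (d.gk k) (conjExp (d.q k))

/-- The (Bilateral) Small Lebesgue norm `‖g‖_{SL(ψ)}`. -/
def smallNorm {X : Type*} [MeasurableSpace X] (μ : Measure X) (ψ : ℝ → ℝ) (a : ℝ) (b : ℝ≥0∞)
    (g : X → ℝ) : ℝ≥0∞ :=
  ⨅ d : SLDecomp μ a b g, d.cost ψ

/-- The filter describing `p → b−` when `b ≤ ∞`. -/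
def rightEndFilter (b : ℝ≥0∞) : Filter ℝ := if b = ⊤ then atTop else 𝓝[<] b.toReal

/-- The measure `μ` is nonatomic. -/
def IsNonatomic {X : Type*} [MeasurableSpace X] (μ : Measure X) : Prop :=
  ∀ A : Set X, MeasurableSet A → 0 < μ A →
    ∃ B ⊆ A, MeasurableSet B ∧ 0 < μ B ∧ μ B < μ A

/-- The fundamental function of the Grand Lebesgue space: `φ(G(ψ), δ) = sup_p δ^{1/p}/ψ(p)`. -/
def fund (ψ : ℝ → ℝ) (a : ℝ) (b : ℝ≥0∞) (δ : ℝ≥0∞) : ℝ≥0∞ :=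
  ⨆ p ∈ gIoo a b, δ ^ (1 / p) / ENNReal.ofReal (ψ p)


/-!
The ratio `p ↦ |f|_p / ψ(p)` is continuous on `(a, b)` and tends to `0` at both ends, so it
attains its supremum `‖f‖_{G(ψ)}` at some `σ`. For `g = |f|^{σ-1}` one has
`∫ f g = |f|_σ ^ σ = |f|_σ |g|_{σ'}`, and the one-term decomposition of `g` gives
`‖f‖_{G(ψ)} ‖g‖_{SL(ψ)} ≤ ‖f‖_{G(ψ)} ψ(σ) |g|_{σ'} = |f|_σ |g|_{σ'}`. The reverse inequality is
Hölder's inequality applied termwise to an arbitrary decomposition `g = ∑ gₖ`, combined with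
`|f|_q ≤ ‖f‖_{G(ψ)} ψ(q)`.
-/

lemma ENNReal.ofReal_le_tsum_ofReal_of_hasSum {u : ℕ → ℝ} {s : ℝ} (h : HasSum u s) :
    ENNReal.ofReal s ≤ ∑' k, ENNReal.ofReal (u k) :=
  le_of_tendsto (ENNReal.continuous_ofReal.continuousAt.tendsto.comp h) <|
    Eventually.of_forall fun F =>
      (Finset.le_sum_of_subadditive _ ENNReal.ofReal_zero.le
        (fun _ _ => ENNReal.ofReal_add_le) F u).trans (ENNReal.sum_le_tsum F)

lemma conjExp_pos {q : ℝ} (hq : 1 < q) : 0 < conjExp q :=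
  div_pos (by linarith) (by linarith)

lemma isOpen_gIoo (a : ℝ) (b : ℝ≥0∞) : IsOpen (gIoo a b) :=
  (isOpen_lt continuous_const continuous_id).inter
    (isOpen_lt ENNReal.continuous_ofReal continuous_const)

lemma exists_forall_of_eventually_rightEndFilter {P : ℝ → Prop} {b : ℝ≥0∞} (hb : b ≠ 0)
    (h : ∀ᶠ p in rightEndFilter b, P p) :
    ∃ d, ENNReal.ofReal d < b ∧ ∀ p, d < p → ENNReal.ofReal p < b → P p := by
  unfold rightEndFilter at h
  split_ifs at h with hbtop
  · obtain ⟨d, hd⟩ := eventually_atTop.1 h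
    exact ⟨d, by simp [hbtop], fun p hdp _ => hd p hdp.le⟩
  · obtain ⟨d, hdb, hsub⟩ := mem_nhdsLT_iff_exists_Ioo_subset.1 h
    rw [← ENNReal.ofReal_toReal hbtop]
    exact ⟨d, (ENNReal.ofReal_lt_ofReal_iff (ENNReal.toReal_pos hb hbtop)).2 hdb,
      fun p hdp hpb => hsub ⟨hdp, (ENNReal.ofReal_lt_ofReal_iff'.1 hpb).1⟩⟩

theorem exists_isMaxOn_gIoo {β : Type*} [LinearOrder β] [TopologicalSpace β] [OrderTopology β]
    {F : ℝ → β} {a : ℝ} {b : ℝ≥0∞} {l : β} (hF : ContinuousOn F (gIoo a b))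
    (hFa : Tendsto F (𝓝[>] a) (𝓝 l)) (hFb : Tendsto F (rightEndFilter b) (𝓝 l))
    {p₀ : ℝ} (hp₀ : p₀ ∈ gIoo a b) (hl : l < F p₀) :
    ∃ σ ∈ gIoo a b, IsMaxOn F (gIoo a b) σ := by
  obtain ⟨c, hac, hc⟩ := mem_nhdsGT_iff_exists_Ioo_subset.1 (hFa.eventually_lt_const hl)
  obtain ⟨d, hdb, hd⟩ := exists_forall_of_eventually_rightEndFilter
    (ne_bot_of_gt hp₀.2) (hFb.eventually_lt_const hl)
  set K := Icc (min c p₀) (max d p₀)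
  have hp₀K : p₀ ∈ K := ⟨min_le_right _ _, le_max_right _ _⟩
  have hK : K ⊆ gIoo a b := fun p hp =>
    ⟨(lt_min hac hp₀.1).trans_le hp.1,
      (ENNReal.ofReal_le_ofReal hp.2).trans_lt (by simpa using And.intro hdb hp₀.2)⟩
  obtain ⟨σ, hσK, hσ⟩ := isCompact_Icc.exists_isMaxOn ⟨p₀, hp₀K⟩ (hF.mono hK)
  refine ⟨σ, hK hσK, fun p hp => ?_⟩
  by_cases hpK : p ∈ K
  · exact hσ hpK
  have hFp : F p < F p₀ := by
    rcases not_and_or.1 hpK with h | h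
    · exact hc ⟨hp.1, (not_le.1 h).trans_le (min_le_left _ _)⟩
    · exact hd p ((le_max_left _ _).trans_lt (not_le.1 h)) hp.2
  exact (hFp.trans_le (hσ hp₀K)).le

section Lebesgue

variable {X : Type*} [MeasurableSpace X] {μ : Measure X}

lemma lpNorm_zero {p : ℝ} (hp : 0 < p) : lpNorm μ 0 p = 0 := by
  simp [_root_.lpNorm, Real.zero_rpow hp.ne', hp]

lemma lpNorm_rpow_self (f : X → ℝ) {p : ℝ} (hp : p ≠ 0) :
    lpNorm μ f p ^ p = ∫⁻ x, ENNReal.ofReal (|f x| ^ p) ∂μ := by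
  rw [_root_.lpNorm, ← ENNReal.rpow_mul, one_div_mul_cancel hp, ENNReal.rpow_one]

lemma lintegral_ofReal_mul_le_lpNorm_mul {q : ℝ} (hq : 1 < q) {f u : X → ℝ}
    (hf : AEMeasurable f μ) (hu : AEMeasurable u μ) :
    ∫⁻ x, ENNReal.ofReal (f x * u x) ∂μ ≤ lpNorm μ f q * lpNorm μ u (conjExp q) := by
  have hpq : q.HolderConjugate (conjExp q) := Real.HolderConjugate.conjExponent hq
  have hofReal_rpow : ∀ (v : X → ℝ) {r : ℝ}, 0 ≤ r →
      ∀ x, ENNReal.ofReal (|v x| ^ r) = ENNReal.ofReal |v x| ^ r := fun v r hr x =>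
    (ENNReal.ofReal_rpow_of_nonneg (abs_nonneg _) hr).symm
  calc ∫⁻ x, ENNReal.ofReal (f x * u x) ∂μ
      ≤ ∫⁻ x, ENNReal.ofReal |f x| * ENNReal.ofReal |u x| ∂μ := by
        gcongr with x
        rw [← ENNReal.ofReal_mul (abs_nonneg _), ← abs_mul]
        exact ENNReal.ofReal_le_ofReal (le_abs_self _)
    _ ≤ lpNorm μ f q * lpNorm μ u (conjExp q) := by
        simp only [_root_.lpNorm, hofReal_rpow f hpq.nonneg, hofReal_rpow u hpq.symm.nonneg]
        exact ENNReal.lintegral_mul_le_Lp_mul_Lq μ hpq hf.abs.ennreal_ofReal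
          hu.abs.ennreal_ofReal

lemma lpNorm_abs_rpow_sub_one_conjExp (f : X → ℝ) {σ : ℝ} (hσ : 1 < σ) :
    lpNorm μ (fun x => |f x| ^ (σ - 1)) (conjExp σ) = lpNorm μ f σ ^ (σ - 1) := by
  have hσ1 : σ - 1 ≠ 0 := (sub_pos.2 hσ).ne'
  have hpow : ∀ x, |(|f x| ^ (σ - 1))| ^ conjExp σ = |f x| ^ σ := fun x => by
    rw [abs_of_nonneg (Real.rpow_nonneg (abs_nonneg _) _), ← Real.rpow_mul (abs_nonneg _),
      conjExp, mul_div_cancel₀ _ hσ1]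
  simp only [_root_.lpNorm, hpow, ← ENNReal.rpow_mul]
  congr 1
  rw [conjExp]
  field_simp

lemma lintegral_ofReal_mul_abs_rpow_sub_one {f : X → ℝ} (hf : ∀ᵐ x ∂μ, 0 ≤ f x) {σ : ℝ}
    (hσ : 0 < σ) :
    ∫⁻ x, ENNReal.ofReal (f x * |f x| ^ (σ - 1)) ∂μ = lpNorm μ f σ ^ σ := by
  rw [lpNorm_rpow_self f hσ.ne']
  refine lintegral_congr_ae (hf.mono fun x hx => congrArg ENNReal.ofReal ?_)
  rw [abs_of_nonneg hx, mul_comm, ← Real.rpow_add_one' hx (by linarith), sub_add_cancel]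

lemma continuousOn_lintegral_ofReal_abs_rpow {f : X → ℝ} (hf : Measurable f) {c d : ℝ}
    (hc : 0 < c) (hfc : ∫⁻ x, ENNReal.ofReal (|f x| ^ c) ∂μ ≠ ⊤)
    (hfd : ∫⁻ x, ENNReal.ofReal (|f x| ^ d) ∂μ ≠ ⊤) :
    ContinuousOn (fun p => ∫⁻ x, ENNReal.ofReal (|f x| ^ p) ∂μ) (Icc c d) := by
  intro p₀ hp₀
  refine tendsto_lintegral_filter_of_dominated_convergence
    (fun x => ENNReal.ofReal (|f x| ^ c) + ENNReal.ofReal (|f x| ^ d))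
    (Eventually.of_forall fun p => (hf.abs.pow_const p).ennreal_ofReal) ?_ ?_ ?_
  · filter_upwards [self_mem_nhdsWithin] with p hp
    refine Eventually.of_forall fun x => ?_
    rcases le_total |f x| 1 with h1 | h1
    · rcases (abs_nonneg (f x)).eq_or_lt with h0 | h0
      · simp [← h0, Real.zero_rpow (hc.trans_le hp.1).ne']
      · exact (ENNReal.ofReal_le_ofReal (Real.rpow_le_rpow_of_exponent_ge h0 h1 hp.1)).trans
          le_self_add
    · exact (ENNReal.ofReal_le_ofReal (Real.rpow_le_rpow_of_exponent_le h1 hp.2)).trans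
        le_add_self
  · rw [lintegral_add_left (hf.abs.pow_const c).ennreal_ofReal]
    exact ENNReal.add_ne_top.2 ⟨hfc, hfd⟩
  · exact Eventually.of_forall fun x => ENNReal.continuous_ofReal.continuousAt.tendsto.comp
      (tendsto_const_nhds.rpow (tendsto_nhdsWithin_of_tendsto_nhds tendsto_id)
        (Or.inr (hc.trans_le hp₀.1)))

lemma continuousOn_lpNorm_div {a : ℝ} {b : ℝ≥0∞} (ha : 0 < a) {ψ : ℝ → ℝ}
    (hψc : ContinuousOn ψ (gIoo a b)) (hψpos : ∀ p ∈ gIoo a b, 0 < ψ p)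
    {f : X → ℝ} (hf : Measurable f) (hfin : ∀ p ∈ gIoo a b, lpNorm μ f p < ⊤) :
    ContinuousOn (fun p => lpNorm μ f p / ENNReal.ofReal (ψ p)) (gIoo a b) := by
  set Φ := fun p : ℝ => ∫⁻ x, ENNReal.ofReal (|f x| ^ p) ∂μ
  have hΦ : ∀ p ∈ gIoo a b, Φ p ≠ ⊤ := fun p hp => by
    simpa only [Φ, lpNorm_rpow_self f (ha.trans hp.1).ne'] using
      ENNReal.rpow_ne_top_of_nonneg (ha.trans hp.1).le (hfin p hp).ne
  have hreal : EqOn (fun p => lpNorm μ f p / ENNReal.ofReal (ψ p))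
      (fun p => ENNReal.ofReal ((Φ p).toReal ^ (1 / p) / ψ p)) (gIoo a b) := fun p hp => by
    dsimp only
    rw [ENNReal.ofReal_div_of_pos (hψpos p hp), ← ENNReal.ofReal_rpow_of_nonneg
      ENNReal.toReal_nonneg (one_div_pos.2 (ha.trans hp.1)).le, ENNReal.ofReal_toReal (hΦ p hp)]
    rfl
  refine ContinuousOn.congr ?_ hreal
  refine (isOpen_gIoo a b).continuousOn_iff.2 fun p₀ hp₀ => ?_
  obtain ⟨c, d, hp₀cd, hcd, hsub⟩ :=
    exists_Icc_mem_subset_of_mem_nhds ((isOpen_gIoo a b).mem_nhds hp₀)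
  have hc : c ∈ gIoo a b := hsub (left_mem_Icc.2 (hp₀cd.1.trans hp₀cd.2))
  have hd : d ∈ gIoo a b := hsub (right_mem_Icc.2 (hp₀cd.1.trans hp₀cd.2))
  have hp₀pos : 0 < p₀ := ha.trans hp₀.1
  have hΦp₀ : ContinuousAt Φ p₀ :=
    (continuousOn_lintegral_ofReal_abs_rpow hf (ha.trans hc.1) (hΦ c hc) (hΦ d hd) p₀
      hp₀cd).continuousAt hcd
  exact ENNReal.continuous_ofReal.continuousAt.tendsto.comp
    ((((ENNReal.tendsto_toReal (hΦ p₀ hp₀)).comp hΦp₀).rpow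
      (tendsto_const_nhds.div tendsto_id hp₀pos.ne') (Or.inr (one_div_pos.2 hp₀pos))).div
      ((hψc p₀ hp₀).continuousAt ((isOpen_gIoo a b).mem_nhds hp₀)) (hψpos p₀ hp₀).ne')

end Lebesgue

section SmallLebesgue

variable {X : Type*} [MeasurableSpace X] {μ : Measure X} {a : ℝ} {b : ℝ≥0∞}

lemma lpNorm_div_le_grandNorm (ψ : ℝ → ℝ) (f : X → ℝ) {p : ℝ} (hp : p ∈ gIoo a b) :
    lpNorm μ f p / ENNReal.ofReal (ψ p) ≤ grandNorm μ ψ a b f :=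
  le_iSup₂ (f := fun p _ => lpNorm μ f p / ENNReal.ofReal (ψ p)) p hp

lemma lpNorm_le_grandNorm_mul {ψ : ℝ → ℝ} (f : X → ℝ) {p : ℝ} (hp : p ∈ gIoo a b)
    (hψp : 0 < ψ p) : lpNorm μ f p ≤ grandNorm μ ψ a b f * ENNReal.ofReal (ψ p) :=
  (ENNReal.div_le_iff_le_mul (Or.inl (ENNReal.ofReal_pos.2 hψp).ne')
    (Or.inl ENNReal.ofReal_ne_top)).1 (lpNorm_div_le_grandNorm ψ f hp)

lemma SLDecomp.lintegral_ofReal_mul_le (ha : 1 ≤ a) {f g : X → ℝ} (hf : Measurable f)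
    (d : SLDecomp μ a b g) :
    ∫⁻ x, ENNReal.ofReal (f x * g x) ∂μ
      ≤ ∑' k, lpNorm μ f (d.q k) * lpNorm μ (d.gk k) (conjExp (d.q k)) :=
  calc ∫⁻ x, ENNReal.ofReal (f x * g x) ∂μ
      ≤ ∫⁻ x, ∑' k, ENNReal.ofReal (f x * d.gk k x) ∂μ :=
        lintegral_mono_ae (d.sum.mono fun x hx =>
          ENNReal.ofReal_le_tsum_ofReal_of_hasSum (hx.mul_left (f x)))
    _ = ∑' k, ∫⁻ x, ENNReal.ofReal (f x * d.gk k x) ∂μ :=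
        lintegral_tsum fun k => (hf.mul (d.meas k)).ennreal_ofReal.aemeasurable
    _ ≤ _ := ENNReal.tsum_le_tsum fun k => lintegral_ofReal_mul_le_lpNorm_mul
        (ha.trans_lt (d.mem k).1) hf.aemeasurable (d.meas k).aemeasurable

theorem lintegral_ofReal_mul_le_grandNorm_mul_smallNorm (ha : 1 ≤ a) {ψ : ℝ → ℝ}
    (hψpos : ∀ p ∈ gIoo a b, 0 < ψ p) {f : X → ℝ} (hf : Measurable f)
    (hG0 : grandNorm μ ψ a b f ≠ 0) (hGtop : grandNorm μ ψ a b f ≠ ⊤) (g : X → ℝ) :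
    ∫⁻ x, ENNReal.ofReal (f x * g x) ∂μ ≤ grandNorm μ ψ a b f * smallNorm μ ψ a b g := by
  rw [smallNorm, ENNReal.mul_iInf_of_ne hG0 hGtop]
  refine le_iInf fun d => (d.lintegral_ofReal_mul_le ha hf).trans ?_
  rw [SLDecomp.cost, ← ENNReal.tsum_mul_left]
  refine ENNReal.tsum_le_tsum fun k => ?_
  rw [← mul_assoc]
  gcongr
  exact lpNorm_le_grandNorm_mul f (d.mem k) (hψpos _ (d.mem k))

def SLDecomp.single {g : X → ℝ} (hg : Measurable g) {σ : ℝ} (hσ : σ ∈ gIoo a b) :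
    SLDecomp μ a b g where
  gk k := if k = 0 then g else 0
  q _ := σ
  meas k := by split_ifs <;> [exact hg; exact measurable_const]
  mem _ := hσ
  sum := Eventually.of_forall fun x => by
    convert hasSum_ite_eq 0 (g x) using 2 with k
    split_ifs <;> rfl

lemma smallNorm_le_ofReal_mul_lpNorm (ψ : ℝ → ℝ) {g : X → ℝ} (hg : Measurable g) {σ : ℝ}
    (hσ : σ ∈ gIoo a b) (hσ1 : 1 < σ) :
    smallNorm μ ψ a b g ≤ ENNReal.ofReal (ψ σ) * lpNorm μ g (conjExp σ) := by
  refine (iInf_le _ (SLDecomp.single hg hσ)).trans_eq ?_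
  rw [SLDecomp.cost, tsum_eq_single 0 fun k hk => ?_]
  · rfl
  · simp only [SLDecomp.single, hk, if_false]
    rw [_root_.lpNorm_zero (conjExp_pos hσ1), mul_zero]

end SmallLebesgue

theorem holder_attained_general {X : Type*} [MeasurableSpace X] (μ : Measure X)
    (a : ℝ) (b : ℝ≥0∞) (ha : 1 ≤ a)
    (ψ : ℝ → ℝ) (hψc : ContinuousOn ψ (gIoo a b)) (hψpos : ∀ p ∈ gIoo a b, 0 < ψ p)
    (f : X → ℝ) (hf : Measurable f) (hfpos : ∀ᵐ x ∂μ, 0 ≤ f x)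
    (hf0 : 0 < grandNorm μ ψ a b f)
    (hfin : ∀ p ∈ gIoo a b, lpNorm μ f p < ⊤)
    (hlima : Tendsto (fun p => lpNorm μ f p / ENNReal.ofReal (ψ p)) (𝓝[>] a) (𝓝 0))
    (hlimb : Tendsto (fun p => lpNorm μ f p / ENNReal.ofReal (ψ p)) (rightEndFilter b) (𝓝 0)) :
    ∃ σ ∈ gIoo a b, ∃ g : X → ℝ, Measurable g ∧ (∀ x, 0 ≤ g x) ∧
      0 < lpNorm μ g (conjExp σ) ∧ lpNorm μ g (conjExp σ) < ⊤ ∧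
      ∫⁻ x, ENNReal.ofReal (f x * g x) ∂μ = grandNorm μ ψ a b f * smallNorm μ ψ a b g := by
  obtain ⟨p₀, hp₀, hFp₀⟩ := lt_biSup_iff.1 hf0
  obtain ⟨σ, hσ, hmax⟩ := exists_isMaxOn_gIoo
    (continuousOn_lpNorm_div (by linarith) hψc hψpos hf hfin) hlima hlimb hp₀ hFp₀
  have hσ1 : 1 < σ := ha.trans_lt hσ.1
  have hψσ : ENNReal.ofReal (ψ σ) ≠ 0 := (ENNReal.ofReal_pos.2 (hψpos σ hσ)).ne'
  set N := lpNorm μ f σ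
  have hG : grandNorm μ ψ a b f = N / ENNReal.ofReal (ψ σ) :=
    le_antisymm (iSup₂_le fun p hp => hmax hp) (lpNorm_div_le_grandNorm ψ f hσ)
  have hN0 : N ≠ 0 := fun h => (hFp₀.trans_le (hmax hp₀)).ne'
    (by simp [show lpNorm μ f σ = 0 from h])
  have hNtop : N ≠ ⊤ := (hfin σ hσ).ne
  have hG0 : grandNorm μ ψ a b f ≠ 0 := by simp [hG, hN0]
  have hGtop : grandNorm μ ψ a b f ≠ ⊤ := hG ▸ ENNReal.div_ne_top hNtop hψσ
  refine ⟨σ, hσ, fun x => |f x| ^ (σ - 1), hf.abs.pow_const _,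
    fun x => Real.rpow_nonneg (abs_nonneg _) _, ?_, ?_, ?_⟩
  · rw [lpNorm_abs_rpow_sub_one_conjExp f hσ1]
    exact ENNReal.rpow_pos (pos_iff_ne_zero.2 hN0) hNtop
  · rw [lpNorm_abs_rpow_sub_one_conjExp f hσ1]
    exact ENNReal.rpow_lt_top_of_nonneg (by linarith) hNtop
  refine le_antisymm
    (lintegral_ofReal_mul_le_grandNorm_mul_smallNorm ha hψpos hf hG0 hGtop _) ?_
  calc grandNorm μ ψ a b f * smallNorm μ ψ a b (fun x => |f x| ^ (σ - 1))
      ≤ N / ENNReal.ofReal (ψ σ) * (ENNReal.ofReal (ψ σ) * N ^ (σ - 1)) := by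
        rw [hG, ← lpNorm_abs_rpow_sub_one_conjExp f hσ1]
        gcongr
        exact smallNorm_le_ofReal_mul_lpNorm ψ (hf.abs.pow_const _) hσ hσ1
    _ = N ^ (1 + (σ - 1)) := by
        rw [← mul_assoc, ENNReal.div_mul_cancel hψσ ENNReal.ofReal_ne_top,
          ENNReal.rpow_add_of_nonneg _ _ zero_le_one (by linarith), ENNReal.rpow_one]
    _ = ∫⁻ x, ENNReal.ofReal (f x * |f x| ^ (σ - 1)) ∂μ := by
        rw [add_sub_cancel, lintegral_ofReal_mul_abs_rpow_sub_one hfpos (by linarith)]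

/-- For a nonnegative `f ∈ G°(ψ)` with `0 < ‖f‖_{G(ψ)} < ∞`, there are `σ ∈ (a,b)` and a
nonnegative measurable `g` with `0 < |g|_{σ'} < ∞` on which the generalized Hölder
inequality between `G(ψ)` and `SL(ψ)` becomes an equality. -/
theorem holder_attained {X : Type*} [MeasurableSpace X] (μ : Measure X) [SigmaFinite μ]
    (a : ℝ) (b : ℝ≥0∞) (ha : 1 ≤ a) (hab : ENNReal.ofReal a < b)
    (ψ : ℝ → ℝ) (hψc : ContinuousOn ψ (gIoo a b)) (hψpos : ∀ p ∈ gIoo a b, 0 < ψ p)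
    (f : X → ℝ) (hf : Measurable f) (hfpos : ∀ᵐ x ∂μ, 0 ≤ f x)
    (hf0 : 0 < grandNorm μ ψ a b f) (hfG : grandNorm μ ψ a b f < ⊤)
    (hfin : ∀ p ∈ gIoo a b, lpNorm μ f p < ⊤)
    (hlima : Tendsto (fun p => lpNorm μ f p / ENNReal.ofReal (ψ p)) (𝓝[>] a) (𝓝 0))
    (hlimb : Tendsto (fun p => lpNorm μ f p / ENNReal.ofReal (ψ p)) (rightEndFilter b) (𝓝 0)) :
    ∃ σ ∈ gIoo a b, ∃ g : X → ℝ, Measurable g ∧ (∀ x, 0 ≤ g x) ∧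
      0 < lpNorm μ g (conjExp σ) ∧ lpNorm μ g (conjExp σ) < ⊤ ∧
      ∫⁻ x, ENNReal.ofReal (f x * g x) ∂μ = grandNorm μ ψ a b f * smallNorm μ ψ a b g :=
  holder_attained_general μ a b ha ψ hψc hψpos f hf hfpos hf0 hfin hlima hlimb

end
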